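/- Let p be a prime, G = ℤ_p the cyclic group of order p, R a unital ring, θ : G → Aut(R) a group homomorphism into the ring automorphisms of R, and A = R_θ[G] the skew group ring. Let N be a right A-module, M a left A-module, and V a left ℤ[G]-module. Equip V ⊗_ℤ M with the semi-diagonal left A-action, and equip N ⊗_R M (where N and M are regarded as R-modules by restriction along R ⊆ A) with the left ℤ[G]-action g·(n ⊗ m) = (n·g^{−1}) ⊗ (g·m), where g acts on N and M through the unit elements 1·g ∈ A. Then the assignment n ⊗ (v ⊗ m) ↦ v ⊗ (n ⊗ m) defines a well-defined isomorphism of abelian groups N ⊗_A (V ⊗_ℤ M) ≅ V ⊗_{ℤ[G]} (N ⊗_R M), where in the target V is regarded as a right ℤ[G]-module via v·g = g^{−1}·v. -/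

import Mathlib

/-!
The skew group ring is formalized as any ring `A` together with an additive isomorphism
`Φ : (⊕_{g ∈ G} R·g) ≃+ A` transporting the skew convolution product
`(r·g)(s·h) = (r·θ(g)(s))·(gh)` to the multiplication of `A` and `1_R·1_G` to `1`; the
element `r·g ∈ A` is `Φ (Pi.single g r)`.  Right `A`-modules are left `Aᵐᵒᵖ`-modules.
The balanced tensor products `N ⊗_A -` and `V ⊗_{ℤ[G]} -` are realized as quotients of
the corresponding tensor products over `ℤ` by the subgroups generated by the balancing
relations.
-/

/-- The skew convolution product on `G → R` induced by `θ`. -/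
def skewConv {R : Type*} [Ring R] {G : Type*} [Group G] [Fintype G]
    (θ : G →* RingAut R) (f f' : G → R) : G → R :=
  fun k => ∑ g : G, f g * θ g (f' (g⁻¹ * k))

/-- The element `1_R·1_G` of the skew group ring, in coordinates. -/
def skewOne (R : Type*) [Ring R] (G : Type*) [Group G] [DecidableEq G] : G → R :=
  fun k => if k = 1 then 1 else 0

/-- Balancing relations for `N ⊗_A (V ⊗_ℤ M)`:  the subgroup of `N ⊗_ℤ (V ⊗_ℤ M)`
generated by `(n·a) ⊗ w - n ⊗ (a·w)`. -/
noncomputable def switchRelA (A : Type) [Ring A]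
    (N : Type) [AddCommGroup N] [Module Aᵐᵒᵖ N]
    (M : Type) [AddCommGroup M] (V : Type) [AddCommGroup V]
    [Module A (TensorProduct ℤ V M)] :
    AddSubgroup (TensorProduct ℤ N (TensorProduct ℤ V M)) :=
  AddSubgroup.closure
    {x | ∃ (a : A) (n : N) (w : TensorProduct ℤ V M),
      x = (MulOpposite.op a • n) ⊗ₜ[ℤ] w - n ⊗ₜ[ℤ] (a • w)}

/-- The balanced tensor product `N ⊗_A (V ⊗_ℤ M)`. -/
noncomputable def switchSrc (A : Type) [Ring A]
    (N : Type) [AddCommGroup N] [Module Aᵐᵒᵖ N]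
    (M : Type) [AddCommGroup M] (V : Type) [AddCommGroup V]
    [Module A (TensorProduct ℤ V M)] :=
  TensorProduct ℤ N (TensorProduct ℤ V M) ⧸ switchRelA A N M V

noncomputable instance (A : Type) [Ring A]
    (N : Type) [AddCommGroup N] [Module Aᵐᵒᵖ N]
    (M : Type) [AddCommGroup M] (V : Type) [AddCommGroup V]
    [Module A (TensorProduct ℤ V M)] : AddCommGroup (switchSrc A N M V) :=
  QuotientAddGroup.Quotient.addCommGroup _

/-- Balancing relations for `V ⊗_{ℤ[G]} (N ⊗_R M)`:  the subgroup of
`V ⊗_ℤ (N ⊗_ℤ M)` generated by the `R`-balancing relations of `N ⊗_R M` (with `R` acting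
through `r ↦ r·1_G ∈ A`) together with the `ℤ[G]`-balancing relations
`(v·g) ⊗ z - v ⊗ (g·z)`, where `v·g = g⁻¹·v` and `g·(n ⊗ m) = (n·g⁻¹) ⊗ (g·m)` with `g`
acting through `1·g ∈ A`. -/
noncomputable def switchRelG (R : Type) [Ring R]
    (G : Type) [Group G] [DecidableEq G]
    (A : Type) [Ring A] (Φ : (G → R) ≃+ A)
    (N : Type) [AddCommGroup N] [Module Aᵐᵒᵖ N]
    (M : Type) [AddCommGroup M] [Module A M]
    (V : Type) [AddCommGroup V] [Module (MonoidAlgebra ℤ G) V] :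
    AddSubgroup (TensorProduct ℤ V (TensorProduct ℤ N M)) :=
  AddSubgroup.closure
    ({x | ∃ (r : R) (v : V) (n : N) (m : M),
        x = v ⊗ₜ[ℤ] ((MulOpposite.op (Φ (Pi.single (1 : G) r)) • n) ⊗ₜ[ℤ] m)
          - v ⊗ₜ[ℤ] (n ⊗ₜ[ℤ] (Φ (Pi.single (1 : G) r) • m))} ∪
     {x | ∃ (g : G) (v : V) (n : N) (m : M),
        x = ((MonoidAlgebra.single g⁻¹ (1 : ℤ)) • v) ⊗ₜ[ℤ] (n ⊗ₜ[ℤ] m)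
          - v ⊗ₜ[ℤ] ((MulOpposite.op (Φ (Pi.single g⁻¹ (1 : R))) • n) ⊗ₜ[ℤ]
              (Φ (Pi.single g (1 : R)) • m))})

/-- The balanced tensor product `V ⊗_{ℤ[G]} (N ⊗_R M)`. -/
noncomputable def switchTgt (R : Type) [Ring R]
    (G : Type) [Group G] [DecidableEq G]
    (A : Type) [Ring A] (Φ : (G → R) ≃+ A)
    (N : Type) [AddCommGroup N] [Module Aᵐᵒᵖ N]
    (M : Type) [AddCommGroup M] [Module A M]
    (V : Type) [AddCommGroup V] [Module (MonoidAlgebra ℤ G) V] :=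
  TensorProduct ℤ V (TensorProduct ℤ N M) ⧸ switchRelG R G A Φ N M V

noncomputable instance (R : Type) [Ring R]
    (G : Type) [Group G] [DecidableEq G]
    (A : Type) [Ring A] (Φ : (G → R) ≃+ A)
    (N : Type) [AddCommGroup N] [Module Aᵐᵒᵖ N]
    (M : Type) [AddCommGroup M] [Module A M]
    (V : Type) [AddCommGroup V] [Module (MonoidAlgebra ℤ G) V] :
    AddCommGroup (switchTgt R G A Φ N M V) :=
  QuotientAddGroup.Quotient.addCommGroup _

/-!
The switch `n ⊗ (v ⊗ m) ↦ v ⊗ (n ⊗ m)` is already an isomorphism of the tensor products over `ℤ`,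
so it suffices that it carries the `A`-balancing relations onto the `R`- and `ℤ[G]`-balancing
relations.  As an abelian group `A` is spanned by the elements `r·g = (r·1)(1·g)`, and by the
semi-diagonal action, balancing over `r·1` is balancing over `R` while balancing over the unit
`1·g` is balancing over `g ∈ ℤ[G]`.
-/

open TensorProduct MulOpposite

theorem skewOne_eq_single (R G : Type*) [Ring R] [Group G] [DecidableEq G] :
    skewOne R G = Pi.single 1 1 := by
  funext k
  simp [skewOne, Pi.single_apply]

theorem skewConv_single {R G : Type*} [Ring R] [Group G] [Fintype G] [DecidableEq G]
    (θ : G →* RingAut R) (g h : G) (r s : R) :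
    skewConv θ (Pi.single g r) (Pi.single h s) = Pi.single (g * h) (r * θ g s) := by
  funext k
  rw [skewConv, Finset.sum_eq_single g (fun b _ hb => by simp [hb]) (by simp)]
  by_cases hk : k = g * h
  · simp [hk]
  · have : g⁻¹ * k ≠ h := fun h' => hk (by rw [← h', mul_inv_cancel_left])
    simp [this, hk]

theorem induction_on_single {ι R A : Type*} [Fintype ι] [DecidableEq ι] [AddCommMonoid R]
    [AddCommMonoid A] {Φ : (ι → R) ≃+ A} {P : A → Prop} (zero : P 0)
    (add : ∀ a b, P a → P b → P (a + b)) (single : ∀ i r, P (Φ (Pi.single i r))) (a : A) :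
    P a := by
  have ha : a = ∑ i, Φ (Pi.single i (Φ.symm a i)) := by
    rw [← map_sum, Finset.univ_sum_single, Φ.apply_symm_apply]
  rw [ha]
  exact Finset.sum_induction _ P add zero fun i _ => single i _

namespace SkewGroupRing

variable {R G A : Type*} [Ring R] [Group G] [Fintype G] [DecidableEq G] {θ : G →* RingAut R}
  [Ring A] {Φ : (G → R) ≃+ A}

theorem single_mul_single (hΦmul : ∀ f f', Φ f * Φ f' = Φ (skewConv θ f f')) (g h : G)
    (r s : R) : Φ (Pi.single g r) * Φ (Pi.single h s) = Φ (Pi.single (g * h) (r * θ g s)) := by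
  rw [hΦmul, skewConv_single]

theorem single_eq_single_one_mul (hΦmul : ∀ f f', Φ f * Φ f' = Φ (skewConv θ f f')) (g : G)
    (r : R) : Φ (Pi.single g r) = Φ (Pi.single 1 r) * Φ (Pi.single g 1) := by
  simp [single_mul_single hΦmul]

theorem single_inv_mul_single (hΦmul : ∀ f f', Φ f * Φ f' = Φ (skewConv θ f f'))
    (hΦone : Φ (skewOne R G) = 1) (g : G) :
    Φ (Pi.single g⁻¹ 1) * Φ (Pi.single g 1) = 1 := by
  simp [single_mul_single hΦmul, ← hΦone, skewOne_eq_single]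

end SkewGroupRing

open SkewGroupRing

/-- `TensorProduct.leftComm`, retyped so that `N ⊗[ℤ] M` carries the `ℤ`-module structure
`AddCommGroup.toIntModule`, as in `switchRelG`. -/
def tensorSwitch (N V M : Type*) [AddCommGroup N] [AddCommGroup V] [AddCommGroup M] :
    N ⊗[ℤ] (V ⊗[ℤ] M) ≃+ V ⊗[ℤ] (N ⊗[ℤ] M) :=
  (leftComm ℤ N V M).toAddEquiv

@[simp]
theorem tensorSwitch_tmul {N V M : Type*} [AddCommGroup N] [AddCommGroup V] [AddCommGroup M]
    (n : N) (v : V) (m : M) : tensorSwitch N V M (n ⊗ₜ (v ⊗ₜ m)) = v ⊗ₜ (n ⊗ₜ m) :=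
  rfl

@[simp]
theorem tensorSwitch_symm_tmul {N V M : Type*} [AddCommGroup N] [AddCommGroup V]
    [AddCommGroup M] (n : N) (v : V) (m : M) :
    (tensorSwitch N V M).symm (v ⊗ₜ (n ⊗ₜ m)) = n ⊗ₜ (v ⊗ₜ m) :=
  rfl

section Switch

variable {R G A : Type} [Ring R] [Group G] [DecidableEq G] [Ring A] {Φ : (G → R) ≃+ A}
  {N M V : Type} [AddCommGroup N] [Module Aᵐᵒᵖ N] [AddCommGroup M] [Module A M]
  [AddCommGroup V] [Module (MonoidAlgebra ℤ G) V]

local notation "πG" => QuotientAddGroup.mk' (switchRelG R G A Φ N M V)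

theorem mk_tmul_op_smul_tmul (r : R) (v : V) (n : N) (m : M) :
    πG (v ⊗ₜ ((op (Φ (Pi.single 1 r)) • n) ⊗ₜ m)) = πG (v ⊗ₜ (n ⊗ₜ (Φ (Pi.single 1 r) • m))) :=
  (QuotientAddGroup.eq_iff_sub_mem).2
    (AddSubgroup.subset_closure (Set.mem_union_left _ ⟨r, v, n, m, rfl⟩))

theorem mk_tmul_op_unit_smul_tmul (g : G) (v : V) (n : N) (m : M) :
    πG (v ⊗ₜ ((op (Φ (Pi.single g 1)) • n) ⊗ₜ (Φ (Pi.single g⁻¹ 1) • m))) =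
      πG ((MonoidAlgebra.single g (1 : ℤ) • v) ⊗ₜ (n ⊗ₜ m)) := by
  symm
  exact (QuotientAddGroup.eq_iff_sub_mem).2
    (AddSubgroup.subset_closure (Set.mem_union_right _ ⟨g⁻¹, v, n, m, by rw [inv_inv]⟩))

variable [Fintype G] {θ : G →* RingAut R}

theorem mk_tmul_op_single_smul_tmul (hΦmul : ∀ f f', Φ f * Φ f' = Φ (skewConv θ f f'))
    (hΦone : Φ (skewOne R G) = 1) (g : G) (r : R) (v : V) (n : N) (m : M) :
    πG (v ⊗ₜ ((op (Φ (Pi.single g r)) • n) ⊗ₜ m)) =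
      πG ((MonoidAlgebra.single g (1 : ℤ) • v) ⊗ₜ (n ⊗ₜ (Φ (Pi.single g r) • m))) := by
  set u := fun h : G => Φ (Pi.single h (1 : R))
  calc _ = πG (v ⊗ₜ ((op (u g) • op (Φ (Pi.single 1 r)) • n) ⊗ₜ (u g⁻¹ • u g • m))) := by
        rw [← mul_smul (u g⁻¹), single_inv_mul_single hΦmul hΦone, one_smul, smul_smul, ← op_mul,
          ← single_eq_single_one_mul hΦmul]
    _ = πG ((MonoidAlgebra.single g (1 : ℤ) • v) ⊗ₜ ((op (Φ (Pi.single 1 r)) • n) ⊗ₜ (u g • m))) :=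
        mk_tmul_op_unit_smul_tmul g v _ _
    _ = _ := by
        rw [mk_tmul_op_smul_tmul, ← mul_smul, ← single_eq_single_one_mul hΦmul]

variable [Module A (V ⊗[ℤ] M)]

local notation "πA" => QuotientAddGroup.mk' (switchRelA A N M V)

omit [Module A M] in
theorem mk_op_smul_tmul (a : A) (n : N) (w : V ⊗[ℤ] M) :
    πA ((op a • n) ⊗ₜ w) = πA (n ⊗ₜ (a • w)) :=
  (QuotientAddGroup.eq_iff_sub_mem).2 (AddSubgroup.subset_closure ⟨a, n, w, rfl⟩)

theorem mk_tensorSwitch_op_smul_tmul (hΦmul : ∀ f f', Φ f * Φ f' = Φ (skewConv θ f f'))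
    (hΦone : Φ (skewOne R G) = 1)
    (hsemi : ∀ (r : R) (g : G) (v : V) (m : M),
      (Φ (Pi.single g r)) • (v ⊗ₜ[ℤ] m) =
        ((MonoidAlgebra.single g (1 : ℤ)) • v) ⊗ₜ[ℤ] ((Φ (Pi.single g r)) • m))
    (a : A) (n : N) (w : V ⊗[ℤ] M) :
    πG (tensorSwitch N V M ((op a • n) ⊗ₜ w)) = πG (tensorSwitch N V M (n ⊗ₜ (a • w))) := by
  induction a using induction_on_single (Φ := Φ) generalizing n w with
  | zero => simp
  | add a b ha hb => simp only [op_add, add_smul, add_tmul, tmul_add, map_add, ha, hb]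
  | single g r =>
    induction w using TensorProduct.induction_on with
    | zero => simp
    | tmul v m =>
      rw [hsemi, tensorSwitch_tmul, tensorSwitch_tmul]
      exact mk_tmul_op_single_smul_tmul hΦmul hΦone g r v n m
    | add w w' hw hw' => simp only [tmul_add, smul_add, map_add, hw, hw']

theorem map_tensorSwitch_switchRelA (hΦmul : ∀ f f', Φ f * Φ f' = Φ (skewConv θ f f'))
    (hΦone : Φ (skewOne R G) = 1)
    (hsemi : ∀ (r : R) (g : G) (v : V) (m : M),
      (Φ (Pi.single g r)) • (v ⊗ₜ[ℤ] m) =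
        ((MonoidAlgebra.single g (1 : ℤ)) • v) ⊗ₜ[ℤ] ((Φ (Pi.single g r)) • m)) :
    (switchRelA A N M V).map (tensorSwitch N V M).toAddMonoidHom = switchRelG R G A Φ N M V := by
  apply le_antisymm
  · rw [AddSubgroup.map_le_iff_le_comap, switchRelA, AddSubgroup.closure_le]
    rintro _ ⟨a, n, w, rfl⟩
    rw [SetLike.mem_coe, AddSubgroup.mem_comap, map_sub, ← QuotientAddGroup.eq_iff_sub_mem]
    exact mk_tensorSwitch_op_smul_tmul hΦmul hΦone hsemi a n w
  · rw [switchRelG, AddSubgroup.closure_le]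
    rintro _ (⟨r, v, n, m, rfl⟩ | ⟨g, v, n, m, rfl⟩) <;>
      rw [SetLike.mem_coe, AddSubgroup.mem_map_equiv, map_sub, ← QuotientAddGroup.eq_iff_sub_mem,
        ← QuotientAddGroup.mk'_apply, ← QuotientAddGroup.mk'_apply, tensorSwitch_symm_tmul,
        tensorSwitch_symm_tmul, mk_op_smul_tmul, hsemi]
    · rw [← MonoidAlgebra.one_def, one_smul]
    · rw [← mul_smul, single_inv_mul_single hΦmul hΦone, one_smul]

end Switch

theorem switch_tensor_iso_general
    (p : ℕ) [NeZero p]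
    (R : Type) [Ring R] (θ : Multiplicative (ZMod p) →* RingAut R)
    -- `A` is the skew group ring `R_θ[ℤ_p]`:
    (A : Type) [Ring A] (Φ : (Multiplicative (ZMod p) → R) ≃+ A)
    (hΦmul : ∀ f f', Φ f * Φ f' = Φ (skewConv θ f f'))
    (hΦone : Φ (skewOne R (Multiplicative (ZMod p))) = 1)
    -- `N` is a right `A`-module, `M` a left `A`-module, `V` a left `ℤ[G]`-module:
    (N : Type) [AddCommGroup N] [Module Aᵐᵒᵖ N]
    (M : Type) [AddCommGroup M] [Module A M]
    (V : Type) [AddCommGroup V] [Module (MonoidAlgebra ℤ (Multiplicative (ZMod p))) V]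
    -- `V ⊗_ℤ M` carries the semi-diagonal left `A`-action:
    [Module A (TensorProduct ℤ V M)]
    (hsemi : ∀ (r : R) (g : Multiplicative (ZMod p)) (v : V) (m : M),
      (Φ (Pi.single g r)) • (v ⊗ₜ[ℤ] m) =
        ((MonoidAlgebra.single g (1 : ℤ)) • v) ⊗ₜ[ℤ] ((Φ (Pi.single g r)) • m)) :
    -- `n ⊗ (v ⊗ m) ↦ v ⊗ (n ⊗ m)` is a well-defined isomorphism of abelian groups:
    ∃ φ : switchSrc A N M V →+ switchTgt R (Multiplicative (ZMod p)) A Φ N M V,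
      (∀ (n : N) (v : V) (m : M),
        φ (QuotientAddGroup.mk' _ (n ⊗ₜ[ℤ] (v ⊗ₜ[ℤ] m))) =
          QuotientAddGroup.mk' _ (v ⊗ₜ[ℤ] (n ⊗ₜ[ℤ] m))) ∧
      Function.Bijective φ :=
  let φ := QuotientAddGroup.congr _ _ (tensorSwitch N V M)
    (map_tensorSwitch_switchRelA hΦmul hΦone hsemi)
  ⟨φ.toAddMonoidHom, fun _ _ _ => rfl, φ.bijective⟩

theorem switch_tensor_iso
    (p : ℕ) (hp : p.Prime) [NeZero p]
    (R : Type) [Ring R] (θ : Multiplicative (ZMod p) →* RingAut R)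
    -- `A` is the skew group ring `R_θ[ℤ_p]`:
    (A : Type) [Ring A] (Φ : (Multiplicative (ZMod p) → R) ≃+ A)
    (hΦmul : ∀ f f', Φ f * Φ f' = Φ (skewConv θ f f'))
    (hΦone : Φ (skewOne R (Multiplicative (ZMod p))) = 1)
    -- `N` is a right `A`-module, `M` a left `A`-module, `V` a left `ℤ[G]`-module:
    (N : Type) [AddCommGroup N] [Module Aᵐᵒᵖ N]
    (M : Type) [AddCommGroup M] [Module A M]
    (V : Type) [AddCommGroup V] [Module (MonoidAlgebra ℤ (Multiplicative (ZMod p))) V]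
    -- `V ⊗_ℤ M` carries the semi-diagonal left `A`-action:
    [Module A (TensorProduct ℤ V M)]
    (hsemi : ∀ (r : R) (g : Multiplicative (ZMod p)) (v : V) (m : M),
      (Φ (Pi.single g r)) • (v ⊗ₜ[ℤ] m) =
        ((MonoidAlgebra.single g (1 : ℤ)) • v) ⊗ₜ[ℤ] ((Φ (Pi.single g r)) • m)) :
    -- `n ⊗ (v ⊗ m) ↦ v ⊗ (n ⊗ m)` is a well-defined isomorphism of abelian groups:
    ∃ φ : switchSrc A N M V →+ switchTgt R (Multiplicative (ZMod p)) A Φ N M V,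
      (∀ (n : N) (v : V) (m : M),
        φ (QuotientAddGroup.mk' _ (n ⊗ₜ[ℤ] (v ⊗ₜ[ℤ] m))) =
          QuotientAddGroup.mk' _ (v ⊗ₜ[ℤ] (n ⊗ₜ[ℤ] m))) ∧
      Function.Bijective φ :=
  switch_tensor_iso_general p R θ A Φ hΦmul hΦone N M V hsemi
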